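/- arXiv:1906.02416 — 5 statements merged into one kernel-verified Lean document; each statement's English description precedes it below -/
import Mathlib

section
/- Let γ > 0, K ∈ ℕ, and let Ψ = (Ψ_1, …, Ψ_K) ~ FGEM(γ, K). Given Ψ, let x = (x_1, …, x_N) be conditionally i.i.d. with P(x_i = k | Ψ) = Ψ_k for k ∈ {1, …, K}, and suppose K > max_i x_i. Let l_k = ∑_{i=1}^N 1{x_i = k}. Then the conditional distribution of Ψ given x is given by the stick-breaking representation Ψ_k = ς_k ∏_{i=1}^{k−1}(1 − ς_i) with independent ς_k ~ Beta(1 + l_k, γ + ∑_{i=k+1}^K l_i) for k = 1, …, K−1 and ς_K = 1 deterministically. -/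
open MeasureTheory ProbabilityTheory

/-- The Beta(a, b) distribution on `ℝ`: the measure on `(0,1)` with density
`x ^ (a-1) (1-x) ^ (b-1) / B(a, b)` with respect to Lebesgue measure, where
`B(a, b) = Γ(a) Γ(b) / Γ(a + b)`. -/
noncomputable def betaMeasure (a b : ℝ) : Measure ℝ :=
  (volume.restrict (Set.Ioo (0 : ℝ) 1)).withDensity fun x =>
    ENNReal.ofReal
      (x ^ (a - 1) * (1 - x) ^ (b - 1) / (Real.Gamma a * Real.Gamma b / Real.Gamma (a + b)))

/-- Finite stick-breaking map: `ς ↦ Ψ` with `Ψ_k = ς_k ∏_{i<k} (1 - ς_i)` (`0`-indexed). -/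
noncomputable def stickBreakFin {K : ℕ} (ς : Fin K → ℝ) : Fin K → ℝ :=
  fun k => ς k * ∏ i ∈ Finset.Iio k, (1 - ς i)

/-- The law of the sticks `(ς_1, …, ς_K)` with independent `ς_k ~ Beta(a k, b k)` for
`k = 1, …, K-1` and `ς_K = 1` deterministically (`0`-indexed: the last coordinate is a
Dirac mass at `1`). -/
noncomputable def finStickLaw (K : ℕ) (a b : Fin K → ℝ) : Measure (Fin K → ℝ) :=
  Measure.pi fun k : Fin K =>
    if (k : ℕ) + 1 = K then Measure.dirac 1 else _root_.betaMeasure (a k) (b k)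

noncomputable def Bfun (a b : ℝ) : ℝ := Real.Gamma a * Real.Gamma b / Real.Gamma (a + b)

lemma Bfun_pos {a b : ℝ} (ha : 0 < a) (hb : 0 < b) : 0 < Bfun a b :=
  div_pos (mul_pos (Real.Gamma_pos_of_pos ha) (Real.Gamma_pos_of_pos hb))
    (Real.Gamma_pos_of_pos (by linarith))

lemma beta_cpow_eq {a b : ℝ} :
    Set.EqOn (fun x : ℝ => ((x : ℂ) ^ ((a : ℂ) - 1) * (1 - (x : ℂ)) ^ ((b : ℂ) - 1)))
      (fun x : ℝ => ((x ^ (a - 1) * (1 - x) ^ (b - 1) : ℝ) : ℂ)) (Set.Icc 0 1) := by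
  intro x hx
  simp only []
  rw [Complex.ofReal_mul, Complex.ofReal_cpow hx.1 (a - 1),
    Complex.ofReal_cpow (by linarith [hx.2] : (0:ℝ) ≤ 1 - x) (b - 1)]
  push_cast
  ring_nf

lemma integrableOn_beta {a b : ℝ} (ha : 0 < a) (hb : 0 < b) :
    IntegrableOn (fun x : ℝ => x ^ (a - 1) * (1 - x) ^ (b - 1)) (Set.Ioc 0 1) := by
  have h := Complex.betaIntegral_convergent (u := a) (v := b) (by simpa using ha) (by simpa using hb)
  rw [intervalIntegrable_iff_integrableOn_Ioc_of_le (by norm_num)] at h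
  have h2 : IntegrableOn (fun x : ℝ => ((x ^ (a - 1) * (1 - x) ^ (b - 1) : ℝ) : ℂ)) (Set.Ioc 0 1) := by
    refine h.congr_fun ?_ measurableSet_Ioc
    exact fun x hx => (beta_cpow_eq ⟨le_of_lt hx.1, hx.2⟩)
  simpa [IntegrableOn] using h2.re

lemma integral_beta {a b : ℝ} (ha : 0 < a) (hb : 0 < b) :
    ∫ x in Set.Ioc (0:ℝ) 1, x ^ (a - 1) * (1 - x) ^ (b - 1) = Bfun a b := by
  have key : Complex.betaIntegral a b = ((Bfun a b : ℝ) : ℂ) := by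
    have h := Complex.Gamma_mul_Gamma_eq_betaIntegral (s := a) (t := b)
      (by simpa using ha) (by simpa using hb)
    have hne : Complex.Gamma ((a:ℂ) + b) ≠ 0 := by
      rw [show ((a:ℂ) + b) = ((a + b : ℝ) : ℂ) by push_cast; ring, Complex.Gamma_ofReal]
      exact_mod_cast (Real.Gamma_pos_of_pos (by linarith : (0:ℝ) < a + b)).ne'
    rw [show ((a:ℂ) + b) = ((a + b : ℝ) : ℂ) by push_cast; ring] at h
    rw [Complex.Gamma_ofReal, Complex.Gamma_ofReal, Complex.Gamma_ofReal] at h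
    have hne' : ((Real.Gamma (a + b) : ℝ) : ℂ) ≠ 0 := by
      exact_mod_cast (Real.Gamma_pos_of_pos (by linarith : (0:ℝ) < a + b)).ne'
    rw [Bfun]
    push_cast
    rw [eq_div_iff hne']
    linear_combination -h
  have h2 : Complex.betaIntegral a b
      = ((∫ x in Set.Ioc (0:ℝ) 1, x ^ (a - 1) * (1 - x) ^ (b - 1) : ℝ) : ℂ) := by
    rw [Complex.betaIntegral, intervalIntegral.integral_of_le (by norm_num : (0:ℝ) ≤ 1)]
    rw [setIntegral_congr_fun measurableSet_Ioc
      (fun x hx => beta_cpow_eq ⟨le_of_lt hx.1, hx.2⟩)]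
    exact integral_ofReal
  rw [h2] at key
  exact_mod_cast key

lemma betaMeasure_Ioo {a b : ℝ} (ha : 0 < a) (hb : 0 < b) :
    _root_.betaMeasure a b (Set.Ioo 0 1) = 1 := by
  rw [_root_.betaMeasure, withDensity_apply _ measurableSet_Ioo,
    Measure.restrict_restrict measurableSet_Ioo, Set.inter_self]
  rw [← ofReal_integral_eq_lintegral_ofReal]
  · rw [setIntegral_congr_fun measurableSet_Ioo (g := fun x => (x ^ (a-1) * (1-x)^(b-1)) * (Bfun a b)⁻¹)
      (fun x _ => by rw [div_eq_mul_inv]; rfl)]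
    rw [integral_mul_const, ← integral_Ioc_eq_integral_Ioo, integral_beta ha hb,
      mul_inv_cancel₀ (Bfun_pos ha hb).ne', ENNReal.ofReal_one]
  · exact (((integrableOn_beta ha hb).mono_set Set.Ioo_subset_Ioc_self).div_const _)
  · filter_upwards [ae_restrict_mem measurableSet_Ioo] with x hx
    exact div_nonneg (mul_nonneg (Real.rpow_nonneg hx.1.le _)
      (Real.rpow_nonneg (by linarith [hx.2]) _)) (Bfun_pos ha hb).le

lemma betaMeasure_prob {a b : ℝ} (ha : 0 < a) (hb : 0 < b) :
    IsProbabilityMeasure (_root_.betaMeasure a b) := by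
  constructor
  rw [_root_.betaMeasure, withDensity_apply _ MeasurableSet.univ, Measure.restrict_univ]
  have := betaMeasure_Ioo ha hb
  rw [_root_.betaMeasure, withDensity_apply _ measurableSet_Ioo,
    Measure.restrict_restrict measurableSet_Ioo, Set.inter_self] at this
  exact this

lemma measurable_betaDen (a b : ℝ) :
    Measurable (fun x : ℝ => ENNReal.ofReal
      (x ^ (a - 1) * (1 - x) ^ (b - 1) / (Real.Gamma a * Real.Gamma b / Real.Gamma (a + b)))) := by
  fun_prop

/-- Key coordinate reweighting identity. -/
lemma beta_withDensity_pow {a b : ℝ} (ha : 0 < a) (hb : 0 < b) (l s : ℕ) :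
    (_root_.betaMeasure a b).withDensity (fun x => ENNReal.ofReal (x ^ l * (1 - x) ^ s))
      = ENNReal.ofReal (Bfun (a + l) (b + s) / Bfun a b) • _root_.betaMeasure (a + l) (b + s) := by
  have hB := Bfun_pos ha hb
  have hB' := Bfun_pos (by positivity : (0:ℝ) < a + l) (by positivity : (0:ℝ) < b + s)
  rw [_root_.betaMeasure, ← withDensity_mul _ (measurable_betaDen a b) (by fun_prop),
    _root_.betaMeasure, ← withDensity_smul _ (measurable_betaDen (a + l) (b + s))]
  refine withDensity_congr_ae ?_
  filter_upwards [ae_restrict_mem measurableSet_Ioo] with x hx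
  have hx0 : (0:ℝ) < x := hx.1
  have hx1 : (0:ℝ) < 1 - x := by linarith [hx.2]
  show ENNReal.ofReal _ * ENNReal.ofReal _ = ENNReal.ofReal _ * ENNReal.ofReal _
  rw [← ENNReal.ofReal_mul (by positivity), ← ENNReal.ofReal_mul (by positivity)]
  congr 1
  have e1 : x ^ (a - 1) * x ^ l = x ^ (a + l - 1) := by
    rw [← Real.rpow_natCast x l, ← Real.rpow_add hx0]; ring_nf
  have e2 : (1 - x) ^ (b - 1) * (1 - x) ^ s = (1 - x) ^ (b + s - 1) := by
    rw [← Real.rpow_natCast (1 - x) s, ← Real.rpow_add hx1]; ring_nf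
  show x ^ (a-1) * (1-x) ^ (b-1) / Bfun a b * (x ^ l * (1-x) ^ s)
      = Bfun (a + l) (b + s) / Bfun a b * (x ^ (a + l - 1) * (1-x) ^ (b + s - 1) / Bfun (a + l) (b + s))
  rw [← e1, ← e2]
  field_simp

/-- Tonelli for finite products of single-coordinate functions. -/
lemma lintegral_pi_prod {δ : Type*} [Fintype δ] [DecidableEq δ] {π : δ → Type*}
    [∀ i, MeasurableSpace (π i)] [Nonempty (∀ i, π i)] (μ : ∀ i, Measure (π i))
    [∀ i, SigmaFinite (μ i)]
    (g : ∀ i, π i → ENNReal) (hg : ∀ i, Measurable (g i)) :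
    ∫⁻ ς, ∏ i, g i (ς i) ∂Measure.pi μ = ∏ i, ∫⁻ x, g i x ∂μ i := by
  have hmeas : Measurable (fun ς : ∀ i, π i => ∏ j, g j (ς j)) :=
    Finset.measurable_prod _ (fun j _ => (hg j).comp (measurable_pi_apply j))
  have key : ∀ s : Finset δ, ∀ x₀ : ∀ i, π i,
      (∫⋯∫⁻_s, (fun ς => ∏ i, g i (ς i)) ∂μ) x₀
        = (∏ i ∈ s, ∫⁻ x, g i x ∂μ i) * ∏ i ∈ sᶜ, g i (x₀ i) := by
    intro s
    induction s using Finset.induction_on with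
    | empty => intro x₀; simp
    | @insert i s hi ih =>
      intro x₀
      rw [lmarginal_insert _ hmeas hi]
      have hisc : i ∈ sᶜ := by simp [hi]
      have step : ∀ xᵢ : π i,
          (∫⋯∫⁻_s, (fun ς => ∏ j, g j (ς j)) ∂μ) (Function.update x₀ i xᵢ)
            = g i xᵢ * ((∏ j ∈ s, ∫⁻ x, g j x ∂μ j) * ∏ j ∈ sᶜ.erase i, g j (x₀ j)) := by
        intro xᵢ
        rw [ih]
        have h3 : ∏ j ∈ sᶜ, g j (Function.update x₀ i xᵢ j)
            = g i xᵢ * ∏ j ∈ sᶜ.erase i, g j (x₀ j) := by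
          rw [← Finset.mul_prod_erase sᶜ _ hisc, Function.update_self]
          congr 1
          exact Finset.prod_congr rfl fun j hj => by
            rw [Function.update_of_ne (Finset.mem_erase.1 hj).1]
        rw [h3]; ring
      simp_rw [step]
      rw [lintegral_mul_const _ (hg i), Finset.prod_insert hi, Finset.compl_insert]
      ring
  have h := key Finset.univ (Classical.arbitrary _)
  rw [lmarginal_univ] at h
  simpa using h

/-- withDensity of a product density on a pi measure is the pi of withDensities. -/
lemma pi_withDensity {δ : Type*} [Fintype δ] [DecidableEq δ] {π : δ → Type*}
    [∀ i, MeasurableSpace (π i)] [Nonempty (∀ i, π i)] (μ : ∀ i, Measure (π i))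
    [∀ i, SigmaFinite (μ i)]
    (f : ∀ i, π i → ENNReal) (hf : ∀ i, Measurable (f i))
    [∀ i, SigmaFinite ((μ i).withDensity (f i))] :
    (Measure.pi μ).withDensity (fun ς => ∏ i, f i (ς i))
      = Measure.pi (fun i => (μ i).withDensity (f i)) := by
  refine (Measure.pi_eq fun s hs => ?_).symm
  rw [withDensity_apply _ (MeasurableSet.univ_pi hs),
    ← lintegral_indicator (MeasurableSet.univ_pi hs)]
  have : ∀ ς : ∀ i, π i, (Set.univ.pi s).indicator (fun ς => ∏ i, f i (ς i)) ς
      = ∏ i, (s i).indicator (f i) (ς i) := by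
    intro ς
    by_cases h : ς ∈ Set.univ.pi s
    · rw [Set.indicator_of_mem h]
      exact Finset.prod_congr rfl fun i _ =>
        (Set.indicator_of_mem (h i (Set.mem_univ i)) _).symm
    · rw [Set.indicator_of_notMem h]
      rw [Set.mem_univ_pi] at h
      push_neg at h
      obtain ⟨i, hi⟩ := h
      exact (Finset.prod_eq_zero (Finset.mem_univ i)
        (Set.indicator_of_notMem hi _)).symm
  simp_rw [this]
  rw [lintegral_pi_prod μ _ (fun i => (hf i).indicator (hs i))]
  exact Finset.prod_congr rfl fun i _ => by
    rw [lintegral_indicator (hs i), ← withDensity_apply _ (hs i)]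


lemma map_withDensity {α β : Type*} [MeasurableSpace α] [MeasurableSpace β] (μ : Measure α)
    {f : α → β} (hf : Measurable f) {g : β → ENNReal} (hg : Measurable g) :
    (μ.map f).withDensity g = (μ.withDensity (g ∘ f)).map f := by
  ext s hs
  rw [withDensity_apply _ hs, setLIntegral_map hs hg hf,
    Measure.map_apply hf hs, withDensity_apply _ (hf hs)]
  rfl

lemma pi_smul {δ : Type*} [Fintype δ] {π : δ → Type*} [∀ i, MeasurableSpace (π i)]
    (c : δ → ENNReal) (hc : ∀ i, c i ≠ ⊤) (μ : ∀ i, Measure (π i))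
    [∀ i, IsProbabilityMeasure (μ i)] :
    Measure.pi (fun i => c i • μ i) = (∏ i, c i) • Measure.pi μ := by
  haveI : ∀ i, IsFiniteMeasure (c i • μ i) := fun i =>
    ⟨by simp [lt_top_iff_ne_top, hc i]⟩
  refine Measure.pi_eq fun s hs => ?_
  simp [Measure.pi_pi, Finset.prod_mul_distrib]

lemma prod_stick {K N : ℕ} (x : Fin N → Fin K) (ς : Fin K → ℝ) :
    ∏ n : Fin N, stickBreakFin ς (x n)
      = ∏ k : Fin K, (ς k ^ (Finset.univ.filter fun n => x n = k).card
          * (1 - ς k) ^ (∑ i ∈ Finset.Ioi k, (Finset.univ.filter fun n => x n = i).card)) := by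
  set l : Fin K → ℕ := fun k => (Finset.univ.filter fun n => x n = k).card with hl
  calc ∏ n : Fin N, stickBreakFin ς (x n)
      = ∏ k : Fin K, ∏ n ∈ Finset.univ.filter (fun n => x n = k), stickBreakFin ς (x n) :=
        (Finset.prod_fiberwise_of_maps_to (fun n _ => Finset.mem_univ (x n)) _).symm
    _ = ∏ k : Fin K, stickBreakFin ς k ^ l k := Finset.prod_congr rfl fun k _ => by
        rw [Finset.prod_congr rfl (fun n hn => by rw [(Finset.mem_filter.1 hn).2]),
          Finset.prod_const]
    _ = ∏ k : Fin K, (ς k ^ l k * ∏ i ∈ Finset.Iio k, (1 - ς i) ^ l k) := by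
        simp_rw [stickBreakFin, mul_pow, Finset.prod_pow]
    _ = (∏ k : Fin K, ς k ^ l k) * ∏ k : Fin K, ∏ i ∈ Finset.Iio k, (1 - ς i) ^ l k :=
        Finset.prod_mul_distrib
    _ = (∏ k : Fin K, ς k ^ l k) * ∏ i : Fin K, ∏ k ∈ Finset.Ioi i, (1 - ς i) ^ l k := by
        rw [Finset.prod_comm' (t' := Finset.univ) (s' := fun i => Finset.Ioi i) (fun k i => by
          simp [Finset.mem_Iio, Finset.mem_Ioi, and_comm])]
    _ = (∏ k : Fin K, ς k ^ l k) * ∏ i : Fin K, (1 - ς i) ^ (∑ k ∈ Finset.Ioi i, l k) := by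
        simp_rw [Finset.prod_pow_eq_pow_sum]
    _ = _ := Finset.prod_mul_distrib.symm


/-- **Posterior of a finite GEM (FGEM) prior under discrete sampling.**
Let `Ψ = stickBreakFin ς ~ FGEM(γ, K)`, i.e. `ς_1, …, ς_{K-1}` i.i.d. `Beta(1, γ)` and
`ς_K = 1`, and given `Ψ` let `x = (x_1, …, x_N)` be conditionally i.i.d. with
`P(x_i = k | Ψ) = Ψ_k`, with `K > max_i x_i` (`1`-indexed; `0`-indexed below this reads
`(x n) + 1 < K`).  With `l_k = #{i : x_i = k}`, the conditional (posterior) distribution of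
`Ψ` given `x` — the prior reweighted by the likelihood `Ψ ↦ ∏_n Ψ_{x_n}` and renormalized —
is the law of `stickBreakFin ς` with independent `ς_k ~ Beta(1 + l_k, γ + ∑_{i=k+1}^K l_i)`
for `k = 1, …, K-1` and `ς_K = 1`. -/
theorem stmt1 (γ : ℝ) (hγ : 0 < γ) (K : ℕ) (hK : 0 < K) (N : ℕ)
    (x : Fin N → Fin K) (hx : ∀ n, ((x n : ℕ) + 1) < K) :
    ((finStickLaw K (fun _ => 1) (fun _ => γ)).map stickBreakFin).withDensity
        (fun Ψ : Fin K → ℝ => ENNReal.ofReal (∏ n : Fin N, Ψ (x n)))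
      = (((finStickLaw K (fun _ => 1) (fun _ => γ)).map stickBreakFin).withDensity
            (fun Ψ : Fin K → ℝ => ENNReal.ofReal (∏ n : Fin N, Ψ (x n))) Set.univ)
          • ((finStickLaw K
                (fun k => 1 + ((Finset.univ.filter fun n => x n = k).card : ℝ))
                (fun k => γ + ∑ i ∈ Finset.univ.filter fun i : Fin K => k < i,
                    ((Finset.univ.filter fun n => x n = i).card : ℝ))).map
              stickBreakFin) := by
  classical
  set l : Fin K → ℕ := fun k => (Finset.univ.filter fun n => x n = k).card with hl
  set sm : Fin K → ℕ := fun k => ∑ i ∈ Finset.Ioi k, l i with hsm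
  -- coordinate measures
  set ν : Fin K → Measure ℝ := fun k =>
    if (k : ℕ) + 1 = K then Measure.dirac 1 else _root_.betaMeasure ((fun _ => (1:ℝ)) k) ((fun _ => γ) k)
    with hν
  set ν' : Fin K → Measure ℝ := fun k =>
    if (k : ℕ) + 1 = K then Measure.dirac 1 else
      _root_.betaMeasure ((fun k => 1 + ((Finset.univ.filter fun n => x n = k).card : ℝ)) k)
        ((fun k => γ + ∑ i ∈ Finset.univ.filter fun i : Fin K => k < i,
          ((Finset.univ.filter fun n => x n = i).card : ℝ)) k) with hν'
  have hprior : finStickLaw K (fun _ => 1) (fun _ => γ) = Measure.pi ν := rfl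
  have hpost : finStickLaw K
      (fun k => 1 + ((Finset.univ.filter fun n => x n = k).card : ℝ))
      (fun k => γ + ∑ i ∈ Finset.univ.filter fun i : Fin K => k < i,
        ((Finset.univ.filter fun n => x n = i).card : ℝ)) = Measure.pi ν' := rfl
  -- measurability
  have hSB : Measurable (stickBreakFin (K := K)) :=
    measurable_pi_lambda _ fun k => (measurable_pi_apply k).mul
      (Finset.measurable_prod _ fun i _ => measurable_const.sub (measurable_pi_apply i))
  have hF : Measurable (fun Ψ : Fin K → ℝ => ENNReal.ofReal (∏ n : Fin N, Ψ (x n))) :=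
    ENNReal.measurable_ofReal.comp
      (Finset.measurable_prod _ fun n _ => measurable_pi_apply (x n))
  set f : Fin K → ℝ → ENNReal :=
    fun k t => ENNReal.ofReal (t ^ l k * (1 - t) ^ sm k) with hf
  have hfmeas : ∀ k, Measurable (f k) := fun k => by fun_prop
  -- probability instances
  haveI hνp : ∀ k, IsProbabilityMeasure (ν k) := fun k => by
    by_cases h : (k : ℕ) + 1 = K
    · rw [hν]; simp only [if_pos h]; infer_instance
    · rw [hν]; simp only [if_neg h]; exact betaMeasure_prob one_pos hγ
  haveI hν'p : ∀ k, IsProbabilityMeasure (ν' k) := fun k => by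
    by_cases h : (k : ℕ) + 1 = K
    · rw [hν']; simp only [if_pos h]; infer_instance
    · rw [hν']; simp only [if_neg h]
      refine betaMeasure_prob (by positivity) ?_
      have : (0:ℝ) ≤ ∑ i ∈ Finset.univ.filter fun i : Fin K => k < i, (l i : ℝ) :=
        Finset.sum_nonneg fun i _ => by positivity
      linarith
  -- support
  have hsupp : ∀ k, ν k (Set.Ioc (0:ℝ) 1)ᶜ = 0 := fun k => by
    by_cases h : (k : ℕ) + 1 = K
    · rw [hν]; simp only [if_pos h]
      rw [Measure.dirac_apply' _ measurableSet_Ioc.compl]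
      simp
    · rw [hν]; simp only [if_neg h]
      haveI : IsProbabilityMeasure (_root_.betaMeasure 1 γ) := betaMeasure_prob one_pos hγ
      have h1 : _root_.betaMeasure 1 γ (Set.Ioc 0 1) = 1 := le_antisymm prob_le_one
        (le_trans (betaMeasure_Ioo one_pos hγ).ge (measure_mono Set.Ioo_subset_Ioc_self))
      rw [measure_compl measurableSet_Ioc (measure_ne_top _ _), h1]
      simp
  have hae : ∀ᵐ ς ∂Measure.pi ν, ∀ k, ς k ∈ Set.Ioc (0:ℝ) 1 := by
    rw [ae_all_iff]
    intro k
    rw [ae_iff]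
    exact Measure.pi_eval_preimage_null _ (hsupp k)
  -- density ae-equality
  have haeEq : (fun ς => ENNReal.ofReal (∏ n : Fin N, stickBreakFin ς (x n)))
      =ᵐ[Measure.pi ν] fun ς => ∏ k : Fin K, f k (ς k) := by
    filter_upwards [hae] with ς hς
    rw [prod_stick x ς, ENNReal.ofReal_prod_of_nonneg fun k _ =>
      mul_nonneg (pow_nonneg (hς k).1.le _) (pow_nonneg (by linarith [(hς k).2]) _)]
  -- scalar constants
  set c : Fin K → ENNReal := fun k =>
    if (k : ℕ) + 1 = K then 1 else ENNReal.ofReal (Bfun (1 + l k) (γ + sm k) / Bfun 1 γ)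
    with hc
  have hcne : ∀ k, c k ≠ ⊤ := fun k => by
    rw [hc]; by_cases h : (k : ℕ) + 1 = K <;> simp [h]
  -- coordinate identity
  have hco : ∀ k, (ν k).withDensity (f k) = c k • ν' k := fun k => by
    by_cases h : (k : ℕ) + 1 = K
    · rw [hν, hν', hc]; simp only [if_pos h]
      have hl0 : l k = 0 := by
        rw [hl]
        simp only [Finset.card_eq_zero, Finset.filter_eq_empty_iff]
        intro n _ hn
        have := hx n
        rw [hn] at this
        omega
      have hIoi : Finset.Ioi k = (∅ : Finset (Fin K)) :=
        Finset.eq_empty_of_forall_notMem fun i hi => by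
          have h1 : (k : ℕ) < (i : ℕ) := Fin.lt_def.mp (Finset.mem_Ioi.1 hi)
          have h2 : (i : ℕ) < K := i.isLt
          omega
      have hs0 : sm k = 0 := by rw [hsm]; simp [hIoi]
      have : f k = 1 := by
        funext t; rw [hf]; simp [hl0, hs0]
      rw [this, withDensity_one, one_smul]
    · rw [hν, hν', hc]; simp only [if_neg h]
      have hfilt : (Finset.univ.filter fun i : Fin K => k < i) = Finset.Ioi k := by
        ext i; simp [Finset.mem_Ioi]
      have hb' : (γ + ∑ i ∈ Finset.univ.filter fun i : Fin K => k < i, (l i : ℝ))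
          = γ + (sm k : ℝ) := by
        rw [hfilt, hsm]; push_cast; rfl
      have key := beta_withDensity_pow one_pos hγ (l k) (sm k)
      rw [hb']
      exact key
  haveI hfin : ∀ k, IsFiniteMeasure (c k • ν' k) := fun k => by
    refine ⟨?_⟩
    haveI := hν'p k
    rw [Measure.smul_apply, measure_univ, smul_eq_mul, mul_one]
    exact (hcne k).lt_top
  haveI hsf : ∀ k, SigmaFinite ((ν k).withDensity (f k)) := fun k => by
    rw [hco k]
    exact @IsFiniteMeasure.toSigmaFinite ℝ _ _ (hfin k)
  have hνfin : ∀ k, IsFiniteMeasure (ν k) := fun k =>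
    ⟨by rw [(hνp k).measure_univ]; exact ENNReal.one_lt_top⟩
  haveI hνsf : ∀ k, SigmaFinite (ν k) := fun k =>
    @IsFiniteMeasure.toSigmaFinite ℝ _ (ν k) (hνfin k)
  have hν'fin : ∀ k, IsFiniteMeasure (ν' k) := fun k =>
    ⟨by rw [(hν'p k).measure_univ]; exact ENNReal.one_lt_top⟩
  haveI hν'sf : ∀ k, SigmaFinite (ν' k) := fun k =>
    @IsFiniteMeasure.toSigmaFinite ℝ _ (ν' k) (hν'fin k)
  -- main computation
  have hmain : ((finStickLaw K (fun _ => 1) (fun _ => γ)).map stickBreakFin).withDensity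
        (fun Ψ : Fin K → ℝ => ENNReal.ofReal (∏ n : Fin N, Ψ (x n)))
      = (∏ k : Fin K, c k) • (Measure.pi ν').map stickBreakFin := by
    rw [hprior, map_withDensity _ hSB hF]
    have hcomp : ((fun Ψ : Fin K → ℝ => ENNReal.ofReal (∏ n : Fin N, Ψ (x n)))
        ∘ stickBreakFin) = fun ς => ENNReal.ofReal (∏ n : Fin N, stickBreakFin ς (x n)) := rfl
    rw [hcomp, withDensity_congr_ae haeEq, pi_withDensity ν f hfmeas]
    have hfun : (fun k => (ν k).withDensity (f k)) = fun k => c k • ν' k := funext hco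
    rw [hfun, pi_smul c hcne ν', Measure.map_smul]
  haveI : IsProbabilityMeasure (Measure.pi ν') := by
    constructor
    have huniv : ∀ i, ν' i Set.univ = 1 := fun i => (hν'p i).measure_univ
    rw [Measure.pi_univ]
    simp [huniv]
  have hMuniv : (Measure.pi ν').map stickBreakFin Set.univ = 1 := by
    rw [Measure.map_apply hSB MeasurableSet.univ, Set.preimage_univ, measure_univ]
  rw [hpost, hmain, Measure.smul_apply, hMuniv, smul_eq_mul, mul_one]
end

section
/- In the augmented Pólya urn model, the conditional distribution of Ψ given (z, b) coincides with the conditional distribution of Ψ given the statistic l alone; that is, l = (l_k)_k with l_k = ∑_{i : b_i = 1} 1{z_i = k} is a sufficient statistic for Ψ: for any prior distribution on Ψ, the posterior of Ψ given (z, b) depends on (z, b) only through l. -/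
open MeasureTheory ProbabilityTheory

/-!
**Sufficiency of `l` in the augmented Pólya urn model.**  Give `Ψ` (a probability vector on
`ℕ`) an arbitrary prior `π`, and given `Ψ` generate `(z, b)` by the augmented Pólya urn with
concentration `α`.  The posterior of `Ψ` given `(z, b)` — the prior reweighted by the
likelihood `Ψ ↦ p(z, b | Ψ)` and renormalized — depends on `(z, b)` only through the
statistic `l`, `l_k = ∑_{i : b_i = 1} 1{z_i = k}`: any two configurations `(z, b)` and
`(z', b')` (each of positive marginal probability, so that conditioning is well defined)
with the same `l` yield the same posterior, i.e. the conditional distribution of `Ψ` given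
`(z, b)` coincides with the conditional distribution of `Ψ` given `l` alone.
-/

/-- Number of indices `j < i` with `z j = k`. -/
def countBefore {N : ℕ} (z : Fin N → ℕ) (i : Fin N) (k : ℕ) : ℕ :=
  (Finset.univ.filter fun j => j < i ∧ z j = k).card

/-- Joint pmf of `(z, b)` in the augmented Pólya urn model with concentration `α` and base
probability vector `Ψ`: independently `b i ~ Bernoulli (α / (i + α))` (`0`-indexed `i`), and
given `b` and the past draws, `z i` is drawn from `Ψ` if `b i = 1`, and uniformly from the
past values `z j`, `j < i`, if `b i = 0`. -/
noncomputable def urnJoint (N : ℕ) (α : ℝ) (Ψ : ℕ → ℝ) (z : Fin N → ℕ) (b : Fin N → Bool) : ℝ :=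
  ∏ i : Fin N,
    (if b i then α * Ψ (z i) else (countBefore z i (z i) : ℝ)) / (((i : ℕ) : ℝ) + α)

lemma urn_factor (N : ℕ) (α : ℝ) (hα : 0 < α) (z : Fin N → ℕ) (b : Fin N → Bool)
    (T : Finset ℕ) (hT : ∀ i, z i ∈ T) :
    ∃ c : ℝ, 0 ≤ c ∧ ∀ Ψ : ℕ → ℝ,
      urnJoint N α Ψ z b
        = c * ∏ k ∈ T, Ψ k ^ (Finset.univ.filter fun i => b i = true ∧ z i = k).card := by
  set S : Finset (Fin N) := Finset.univ.filter fun i => b i = true with hS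
  refine ⟨(α ^ S.card * ∏ i ∈ Sᶜ, (countBefore z i (z i) : ℝ)) / ∏ i : Fin N, (((i:ℕ):ℝ) + α),
    ?_, ?_⟩
  · apply div_nonneg
    · exact mul_nonneg (pow_nonneg hα.le _) (Finset.prod_nonneg fun i _ => Nat.cast_nonneg _)
    · exact Finset.prod_nonneg fun i _ => by positivity
  · intro Ψ
    have key : ∏ k ∈ T, Ψ k ^ (Finset.univ.filter fun i => b i = true ∧ z i = k).card
        = ∏ i ∈ S, Ψ (z i) := by
      have := Finset.prod_fiberwise_of_maps_to (g := z) (t := T)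
        (fun i (_ : i ∈ S) => hT i) (fun i => Ψ (z i))
      rw [← this]
      refine Finset.prod_congr rfl fun k _ => ?_
      rw [Finset.filter_filter]
      rw [show (∏ i ∈ Finset.univ.filter fun a => b a = true ∧ z a = k, Ψ (z i))
          = ∏ i ∈ Finset.univ.filter fun a => b a = true ∧ z a = k, Ψ k from
        Finset.prod_congr rfl fun i hi => by
          simp only [Finset.mem_filter] at hi; rw [hi.2.2], Finset.prod_const]
    rw [key, urnJoint, Finset.prod_div_distrib]
    rw [← Finset.prod_filter_mul_prod_filter_not Finset.univ (fun i => b i = true)]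
    have h1 : ∏ i ∈ S, (if b i then α * Ψ (z i) else (countBefore z i (z i) : ℝ))
        = α ^ S.card * ∏ i ∈ S, Ψ (z i) := by
      rw [show (∏ i ∈ S, if b i = true then α * Ψ (z i) else (countBefore z i (z i) : ℝ))
          = ∏ i ∈ S, α * Ψ (z i) from Finset.prod_congr rfl fun i hi => by
            simp only [hS, Finset.mem_filter] at hi; rw [if_pos hi.2],
        Finset.prod_mul_distrib, Finset.prod_const]
    have h2 : (Finset.univ.filter fun i => ¬ b i = true) = Sᶜ := by
      simp [hS, Finset.compl_filter]
    have h3 : ∏ i ∈ Sᶜ, (if b i then α * Ψ (z i) else (countBefore z i (z i) : ℝ))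
        = ∏ i ∈ Sᶜ, (countBefore z i (z i) : ℝ) := by
      refine Finset.prod_congr rfl fun i hi => ?_
      simp only [hS, Finset.compl_filter, Finset.mem_filter] at hi
      rw [if_neg (by simpa using hi.2)]
    rw [h2, h1, h3]
    ring

theorem stmt3 (N : ℕ) (α : ℝ) (hα : 0 < α)
    (π : Measure (ℕ → ℝ)) [IsProbabilityMeasure π]
    (hπ : ∀ᵐ Ψ ∂π, (∀ k, 0 ≤ Ψ k) ∧ HasSum Ψ 1)
    (z z' : Fin N → ℕ) (b b' : Fin N → Bool)
    (hl : ∀ k : ℕ,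
      (Finset.univ.filter fun i : Fin N => b i = true ∧ z i = k).card
        = (Finset.univ.filter fun i : Fin N => b' i = true ∧ z' i = k).card)
    (hZ : (∫⁻ Ψ, ENNReal.ofReal (urnJoint N α Ψ z b) ∂π) ≠ 0)
    (hZ' : (∫⁻ Ψ, ENNReal.ofReal (urnJoint N α Ψ z' b') ∂π) ≠ 0) :
    (∫⁻ Ψ, ENNReal.ofReal (urnJoint N α Ψ z b) ∂π)⁻¹ •
        π.withDensity (fun Ψ => ENNReal.ofReal (urnJoint N α Ψ z b))
      = (∫⁻ Ψ, ENNReal.ofReal (urnJoint N α Ψ z' b') ∂π)⁻¹ •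
          π.withDensity (fun Ψ => ENNReal.ofReal (urnJoint N α Ψ z' b')) := by
  classical
  set T : Finset ℕ := (Finset.univ.image z) ∪ (Finset.univ.image z') with hTdef
  have hTz : ∀ i, z i ∈ T := fun i =>
    Finset.mem_union_left _ (Finset.mem_image_of_mem z (Finset.mem_univ i))
  have hTz' : ∀ i, z' i ∈ T := fun i =>
    Finset.mem_union_right _ (Finset.mem_image_of_mem z' (Finset.mem_univ i))
  obtain ⟨c, hc, hfac⟩ := urn_factor N α hα z b T hTz
  obtain ⟨c', hc', hfac'⟩ := urn_factor N α hα z' b' T hTz'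
  set f : (ℕ → ℝ) → ℝ :=
    fun Ψ => ∏ k ∈ T, Ψ k ^ (Finset.univ.filter fun i : Fin N => b i = true ∧ z i = k).card
    with hfdef
  have hfac'2 : ∀ Ψ, urnJoint N α Ψ z' b' = c' * f Ψ := by
    intro Ψ
    rw [hfac' Ψ, hfdef]
    congr 1
    exact Finset.prod_congr rfl fun k _ => by rw [hl k]
  have hfmeas : Measurable f := by
    apply Finset.measurable_prod
    intro k _
    exact (measurable_pi_apply k).pow_const _
  have hgmeas : Measurable fun Ψ => ENNReal.ofReal (f Ψ) :=
    ENNReal.measurable_ofReal.comp hfmeas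
  have hrw : (fun Ψ => ENNReal.ofReal (urnJoint N α Ψ z b))
      = fun Ψ => ENNReal.ofReal c * ENNReal.ofReal (f Ψ) := by
    funext Ψ; rw [hfac Ψ, ENNReal.ofReal_mul hc]
  have hrw' : (fun Ψ => ENNReal.ofReal (urnJoint N α Ψ z' b'))
      = fun Ψ => ENNReal.ofReal c' * ENNReal.ofReal (f Ψ) := by
    funext Ψ; rw [hfac'2 Ψ, ENNReal.ofReal_mul hc']
  rw [hrw, hrw']
  rw [lintegral_const_mul _ hgmeas, lintegral_const_mul _ hgmeas]
  rw [show (fun Ψ => ENNReal.ofReal c * ENNReal.ofReal (f Ψ))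
      = (ENNReal.ofReal c) • fun Ψ => ENNReal.ofReal (f Ψ) from rfl,
    show (fun Ψ => ENNReal.ofReal c' * ENNReal.ofReal (f Ψ))
      = (ENNReal.ofReal c') • fun Ψ => ENNReal.ofReal (f Ψ) from rfl]
  rw [withDensity_smul _ hgmeas, withDensity_smul _ hgmeas]
  rw [hrw] at hZ; rw [hrw'] at hZ'
  rw [lintegral_const_mul _ hgmeas] at hZ
  rw [lintegral_const_mul _ hgmeas] at hZ'
  have hc0 : ENNReal.ofReal c ≠ 0 := fun h => hZ (by rw [h, zero_mul])
  have hc0' : ENNReal.ofReal c' ≠ 0 := fun h => hZ' (by rw [h, zero_mul])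
  have hct : ENNReal.ofReal c ≠ ⊤ := ENNReal.ofReal_ne_top
  have hct' : ENNReal.ofReal c' ≠ ⊤ := ENNReal.ofReal_ne_top
  rw [ENNReal.mul_inv (Or.inl hc0) (Or.inl hct),
    ENNReal.mul_inv (Or.inl hc0') (Or.inl hct')]
  rw [smul_smul, smul_smul]
  congr 1
  rw [mul_comm, ← mul_assoc, ENNReal.mul_inv_cancel hc0 hct, one_mul,
    mul_comm ((ENNReal.ofReal c')⁻¹ * _), ← mul_assoc, ENNReal.mul_inv_cancel hc0' hct', one_mul]
end

section
/- In the augmented Pólya urn model, for any index i' ∈ {2, …, N} and any configuration (z, b_{−i'}) such that both completions (b_{i'} = 0 and b_{i'} = 1) have positive joint probability, the full conditional distribution of b_{i'} is P(b_{i'} = 1 | z, Ψ, b_{−i'}) = α Ψ_{z_{i'}} / ( α Ψ_{z_{i'}} + ∑_{j=1}^{i'−1} 1{z_j = z_{i'}} ). -/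
theorem stmt6 (N : ℕ) (α : ℝ) (hα : 0 < α) (Ψ : ℕ → ℝ)
    (hΨ0 : ∀ k, 0 ≤ Ψ k) (hΨ1 : HasSum Ψ 1)
    (z : Fin N → ℕ) (b : Fin N → Bool) (i' : Fin N) (hi' : 1 ≤ (i' : ℕ))
    (h1 : 0 < urnJoint N α Ψ z (Function.update b i' true))
    (h0 : 0 < urnJoint N α Ψ z (Function.update b i' false)) :
    urnJoint N α Ψ z (Function.update b i' true)
        / (urnJoint N α Ψ z (Function.update b i' true)
            + urnJoint N α Ψ z (Function.update b i' false))
      = α * Ψ (z i') / (α * Ψ (z i') + (countBefore z i' (z i') : ℝ)) := by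
  set P : ℝ := ∏ i ∈ Finset.univ.erase i',
      (if b i then α * Ψ (z i) else (countBefore z i (z i) : ℝ)) / (((i : ℕ) : ℝ) + α) with hP
  have key : ∀ c : Bool, urnJoint N α Ψ z (Function.update b i' c) =
      ((if c then α * Ψ (z i') else (countBefore z i' (z i') : ℝ)) / (((i' : ℕ) : ℝ) + α)) * P := by
    intro c
    rw [urnJoint, ← Finset.mul_prod_erase _ _ (Finset.mem_univ i')]
    rw [Function.update_self]
    congr 1
    apply Finset.prod_congr rfl
    intro i hi
    rw [Function.update_of_ne (Finset.ne_of_mem_erase hi)]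
  set A : ℝ := α * Ψ (z i') with hA
  set C : ℝ := (countBefore z i' (z i') : ℝ) with hC
  set D : ℝ := ((i' : ℕ) : ℝ) + α with hD
  have hDpos : 0 < D := by positivity
  rw [key true] at h1
  rw [key false] at h0
  rw [key true, key false]
  simp only [if_true, if_false, Bool.false_eq_true] at h1 h0 ⊢
  have hA0 : 0 ≤ A := mul_nonneg hα.le (hΨ0 _)
  have hPpos : 0 < P := by
    rcases lt_trichotomy P 0 with h | h | h
    · nlinarith [div_nonneg hA0 hDpos.le]
    · simp [h] at h1
    · exact h
  have hApos : 0 < A := by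
    by_contra h
    have : A = 0 := le_antisymm (not_lt.mp h) hA0
    simp [this] at h1
  have hCpos : 0 < C := by
    by_contra h
    have hC0 : 0 ≤ C := by positivity
    have : C = 0 := le_antisymm (not_lt.mp h) hC0
    simp [this] at h0
  have hsum : A / D * P + C / D * P = (A + C) / D * P := by ring
  rw [hsum]
  rw [div_eq_div_iff (by positivity) (by positivity)]
  field_simp
end

section
/- In the augmented Pólya urn model, conditional on z (and Ψ), the components b_1, …, b_N are mutually independent: the conditional distribution of b given z is the product over i of Bernoulli distributions with success probabilities α Ψ_{z_i} / ( α Ψ_{z_i} + ∑_{j=1}^{i−1} 1{z_j = z_i} ) (with success probability 1 when i = 1), whenever z has positive marginal probability. -/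
theorem stmt7 (N : ℕ) (α : ℝ) (hα : 0 < α) (Ψ : ℕ → ℝ)
    (hΨ0 : ∀ k, 0 ≤ Ψ k) (hΨ1 : HasSum Ψ 1) (z : Fin N → ℕ)
    (hz : 0 < ∑ b : Fin N → Bool, urnJoint N α Ψ z b) :
    ∀ b : Fin N → Bool,
      urnJoint N α Ψ z b / (∑ b' : Fin N → Bool, urnJoint N α Ψ z b')
        = ∏ i : Fin N,
            (if b i then α * Ψ (z i) / (α * Ψ (z i) + (countBefore z i (z i) : ℝ))
             else 1 - α * Ψ (z i) / (α * Ψ (z i) + (countBefore z i (z i) : ℝ))) := by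
  intro b
  have hiα : ∀ i : Fin N, (0:ℝ) < ((i : ℕ) : ℝ) + α := fun i => by positivity
  -- the sum over b' factorizes
  have hsum : (∑ b' : Fin N → Bool, urnJoint N α Ψ z b')
      = ∏ i : Fin N, (α * Ψ (z i) + (countBefore z i (z i) : ℝ)) / (((i : ℕ) : ℝ) + α) := by
    simp only [urnJoint]
    rw [← Fintype.prod_sum fun (i : Fin N) (t : Bool) =>
      (if t = true then α * Ψ (z i) else (countBefore z i (z i) : ℝ)) / (((i : ℕ) : ℝ) + α)]
    refine Finset.prod_congr rfl fun i _ => ?_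
    rw [Fintype.sum_bool]
    simp [← add_div, add_comm]
  have hD : ∀ i : Fin N, 0 < α * Ψ (z i) + (countBefore z i (z i) : ℝ) := by
    intro i
    by_contra hle
    push_neg at hle
    have h0 : α * Ψ (z i) + (countBefore z i (z i) : ℝ) = 0 :=
      le_antisymm hle (add_nonneg (mul_nonneg hα.le (hΨ0 _)) (Nat.cast_nonneg _))
    rw [hsum, Finset.prod_eq_zero (Finset.mem_univ i) (by rw [h0, zero_div])] at hz
    exact lt_irrefl 0 hz
  rw [hsum]
  rw [urnJoint, ← Finset.prod_div_distrib]
  refine Finset.prod_congr rfl fun i _ => ?_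
  have hd := (hiα i).ne'
  have hDi := (hD i).ne'
  by_cases hb : b i = true
  · simp only [hb, if_true]
    rw [div_div_div_eq, mul_comm, mul_div_mul_left _ _ hd]
  · simp only [hb, Bool.false_eq_true, if_false]
    field_simp
    ring
end

section
/- In the augmented Pólya urn model, fix a topic k with Ψ_k > 0, condition on the full sequence z (with positive marginal probability), and let i_1 < i_2 < ⋯ < i_{m_k} enumerate the positions i with z_i = k, where m_k = ∑_{i=1}^N 1{z_i = k}. Then, conditional on z and Ψ, the indicators b_{i_1}, …, b_{i_{m_k}} are independent with P(b_{i_j} = 1 | z, Ψ) = α Ψ_k / (α Ψ_k + j − 1) for j = 1, …, m_k; consequently ∑_{i : z_i = k} 1{b_i = 1} is distributed as a sum of independent Bernoulli(α Ψ_k / (α Ψ_k + j − 1)) random variables over j = 1, …, m_k. -/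
open Finset in
lemma sum_prod_constrained {N : ℕ} (g : Fin N → Bool → ℝ) (S : Finset (Fin N)) (β0 : Fin N → Bool) :
    ∑ b ∈ Finset.univ.filter (fun b : Fin N → Bool => ∀ i ∈ S, b i = β0 i), ∏ i, g i (b i)
      = (∏ i ∈ S, g i (β0 i)) * ∏ i ∈ Sᶜ, (g i true + g i false) := by
  classical
  set t : Fin N → Finset Bool := fun i => if i ∈ S then {β0 i} else Finset.univ with ht
  have hset : Finset.univ.filter (fun b : Fin N → Bool => ∀ i ∈ S, b i = β0 i)
      = Fintype.piFinset t := by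
    ext b
    simp only [Finset.mem_filter, Finset.mem_univ, true_and, Fintype.mem_piFinset, ht]
    constructor
    · intro h i
      by_cases hi : i ∈ S <;> simp [hi, h]
    · intro h i hi
      have := h i
      simpa [hi] using this
  rw [hset, ← Finset.prod_univ_sum]
  rw [← Finset.prod_mul_prod_compl S]
  congr 1
  · exact Finset.prod_congr rfl fun i hi => by simp [ht, hi]
  · refine Finset.prod_congr rfl fun i hi => ?_
    have hi' : i ∉ S := by simpa using hi
    simp [ht, hi', Fintype.sum_bool]

theorem stmt11 (N : ℕ) (α : ℝ) (hα : 0 < α) (Ψ : ℕ → ℝ)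
    (hΨ0 : ∀ j, 0 ≤ Ψ j) (hΨ1 : HasSum Ψ 1)
    (k : ℕ) (hk : 0 < Ψ k) (z : Fin N → ℕ)
    (hz : 0 < ∑ b : Fin N → Bool, urnJoint N α Ψ z b)
    (m : ℕ) (hm : m = (Finset.univ.filter fun i : Fin N => z i = k).card)
    (e : Fin m ≃o {i : Fin N // i ∈ Finset.univ.filter fun i : Fin N => z i = k}) :
    (∀ β : Fin m → Bool,
        (∑ b ∈ Finset.univ.filter (fun b : Fin N → Bool => ∀ j : Fin m, b (e j : Fin N) = β j),
            urnJoint N α Ψ z b)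
            / (∑ b : Fin N → Bool, urnJoint N α Ψ z b)
          = ∏ j : Fin m,
              (if β j then α * Ψ k / (α * Ψ k + ((j : ℕ) : ℝ))
               else 1 - α * Ψ k / (α * Ψ k + ((j : ℕ) : ℝ))))
    ∧ ∀ t : ℕ,
        (∑ b ∈ Finset.univ.filter
            (fun b : Fin N → Bool =>
              (Finset.univ.filter fun i : Fin N => z i = k ∧ b i = true).card = t),
            urnJoint N α Ψ z b)
            / (∑ b : Fin N → Bool, urnJoint N α Ψ z b)
          = ∑ S ∈ Finset.powersetCard t (Finset.univ : Finset (Fin m)),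
              (∏ j ∈ S, α * Ψ k / (α * Ψ k + ((j : ℕ) : ℝ)))
                * ∏ j ∈ Sᶜ, (1 - α * Ψ k / (α * Ψ k + ((j : ℕ) : ℝ))) := by
  classical
  set g : Fin N → Bool → ℝ := fun i c =>
    (if c then α * Ψ (z i) else (countBefore z i (z i) : ℝ)) / (((i : ℕ) : ℝ) + α) with hg
  have hurn : ∀ b, urnJoint N α Ψ z b = ∏ i, g i (b i) := fun b => rfl
  -- the denominator
  have hden : (∑ b : Fin N → Bool, urnJoint N α Ψ z b) = ∏ i, (g i true + g i false) := by
    have h := sum_prod_constrained g ∅ (fun _ => false)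
    simp only [Finset.notMem_empty, false_implies, implies_true, Finset.filter_true,
      Finset.prod_empty, one_mul, Finset.compl_empty] at h
    simp only [hurn]
    exact h
  -- nonnegativity and positivity
  have hge : ∀ (i : Fin N) (c : Bool), 0 ≤ g i c := by
    intro i c
    have hiα : (0:ℝ) < ((i : ℕ) : ℝ) + α := by positivity
    cases c
    · exact div_nonneg (Nat.cast_nonneg _) hiα.le
    · exact div_nonneg (by simpa using mul_nonneg hα.le (hΨ0 (z i))) hiα.le
  have hpos : ∀ i : Fin N, 0 < g i true + g i false := by
    intro i
    rcases lt_or_eq_of_le (add_nonneg (hge i true) (hge i false)) with h | h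
    · exact h
    · exfalso
      have h0 : ∏ i, (g i true + g i false) = 0 :=
        Finset.prod_eq_zero (Finset.mem_univ i) h.symm
      rw [hden, h0] at hz
      exact lt_irrefl _ hz
  -- facts about e
  have hzk : ∀ j : Fin m, z ((e j : Fin N)) = k := by
    intro j
    have h := (e j).2
    simp only [Finset.mem_filter, Finset.mem_univ, true_and] at h
    exact h
  have hcb : ∀ j : Fin m, countBefore z (e j : Fin N) k = (j : ℕ) := by
    intro j
    have himg : (Finset.univ.filter fun i : Fin N => i < (e j : Fin N) ∧ z i = k)
        = (Finset.univ.filter fun j' : Fin m => j' < j).image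
            (fun j' => ((e j' : Fin N))) := by
      ext i
      simp only [Finset.mem_filter, Finset.mem_univ, true_and, Finset.mem_image]
      constructor
      · rintro ⟨hlt, hzi⟩
        have hiK : i ∈ Finset.univ.filter fun i : Fin N => z i = k := by simp [hzi]
        refine ⟨e.symm ⟨i, hiK⟩, ?_, by simp⟩
        have h1 : e (e.symm ⟨i, hiK⟩) < e j := by
          rw [e.apply_symm_apply]
          exact Subtype.mk_lt_mk.mpr hlt
        exact e.lt_iff_lt.mp h1
      · rintro ⟨j', hlt, rfl⟩
        refine ⟨?_, hzk j'⟩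
        have : e j' < e j := e.lt_iff_lt.mpr hlt
        exact Subtype.coe_lt_coe.mpr this
    have hinj : Function.Injective (fun j' : Fin m => ((e j' : Fin N))) := by
      intro a b hab
      exact e.injective (Subtype.coe_injective hab)
    rw [countBefore, himg, Finset.card_image_of_injective _ hinj]
    have : (Finset.univ.filter fun j' : Fin m => j' < j) = Finset.Iio j := by
      ext x; simp
    rw [this, Fin.card_Iio]
  -- per-factor computation
  have hfac : ∀ (j : Fin m) (c : Bool),
      g (e j : Fin N) c / (g (e j : Fin N) true + g (e j : Fin N) false)
        = if c then α * Ψ k / (α * Ψ k + ((j : ℕ) : ℝ))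
          else 1 - α * Ψ k / (α * Ψ k + ((j : ℕ) : ℝ)) := by
    intro j c
    have hc : (0:ℝ) < (((e j : Fin N) : ℕ) : ℝ) + α := by positivity
    have hd : (0:ℝ) < α * Ψ k + ((j : ℕ) : ℝ) := by positivity
    have h1 : g (e j : Fin N) true = α * Ψ k / ((((e j : Fin N) : ℕ) : ℝ) + α) := by
      simp [hg, hzk j]
    have h2 : g (e j : Fin N) false = ((j : ℕ) : ℝ) / ((((e j : Fin N) : ℕ) : ℝ) + α) := by
      simp [hg, hzk j, hcb j]
    have hsum : g (e j : Fin N) true + g (e j : Fin N) false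
        = (α * Ψ k + ((j : ℕ) : ℝ)) / ((((e j : Fin N) : ℕ) : ℝ) + α) := by
      rw [h1, h2, ← add_div]
    cases c
    · rw [hsum, h2, div_div_div_cancel_right₀ hc.ne']
      simp only [Bool.false_eq_true, if_false]
      field_simp
      ring
    · rw [hsum, h1, div_div_div_cancel_right₀ hc.ne']
      simp
  -- reindexing products over K
  have hre : ∀ h : Fin N → ℝ, (∏ i ∈ (Finset.univ.filter fun i : Fin N => z i = k), h i) = ∏ j : Fin m, h ((e j : Fin N)) := by
    intro h
    rw [← Finset.prod_coe_sort (Finset.univ.filter fun i : Fin N => z i = k) h]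
    exact (Fintype.prod_equiv e.toEquiv _ _ (fun j => rfl)).symm
  -- part 1
  have h1 : ∀ β : Fin m → Bool,
      (∑ b ∈ Finset.univ.filter (fun b : Fin N → Bool => ∀ j : Fin m, b (e j : Fin N) = β j),
          urnJoint N α Ψ z b)
          / (∑ b : Fin N → Bool, urnJoint N α Ψ z b)
        = ∏ j : Fin m,
            (if β j then α * Ψ k / (α * Ψ k + ((j : ℕ) : ℝ))
             else 1 - α * Ψ k / (α * Ψ k + ((j : ℕ) : ℝ))) := by
    intro β
    set β0 : Fin N → Bool := fun i => if h : i ∈ Finset.univ.filter fun i : Fin N => z i = k then β (e.symm ⟨i, h⟩) else false with hβ0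
    have hβ0e : ∀ j : Fin m, β0 (e j : Fin N) = β j := by
      intro j
      have hmem : (e j : Fin N) ∈ Finset.univ.filter fun i : Fin N => z i = k := (e j).2
      rw [hβ0]
      simp only [hmem, dif_pos]
      congr 1
      have : (⟨(e j : Fin N), hmem⟩ : {i : Fin N // i ∈ Finset.univ.filter fun i : Fin N => z i = k}) = e j := Subtype.coe_eta _ _
      rw [this, e.symm_apply_apply]
    have hfilt : (Finset.univ.filter
          (fun b : Fin N → Bool => ∀ j : Fin m, b (e j : Fin N) = β j))
        = Finset.univ.filter (fun b : Fin N → Bool => ∀ i ∈ Finset.univ.filter fun i : Fin N => z i = k, b i = β0 i) := by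
      ext b
      simp only [Finset.mem_filter, Finset.mem_univ, true_and]
      constructor
      · intro h i hi
        have hiK : i ∈ Finset.univ.filter fun i : Fin N => z i = k := by simp [hi]
        have hb : b ((e (e.symm ⟨i, hiK⟩) : Fin N)) = β (e.symm ⟨i, hiK⟩) := h _
        rw [e.apply_symm_apply] at hb
        rw [hβ0]
        simp only []
        rw [dif_pos hiK]
        simpa using hb
      · intro h j
        rw [h _ (hzk j), hβ0e]
    have hnum : (∑ b ∈ Finset.univ.filter
          (fun b : Fin N → Bool => ∀ j : Fin m, b (e j : Fin N) = β j),
          urnJoint N α Ψ z b)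
        = (∏ i ∈ (Finset.univ.filter fun i : Fin N => z i = k), g i (β0 i)) * ∏ i ∈ (Finset.univ.filter fun i : Fin N => z i = k)ᶜ, (g i true + g i false) := by
      rw [hfilt]
      simp only [hurn]
      exact sum_prod_constrained g (Finset.univ.filter fun i : Fin N => z i = k) β0
    rw [hnum, hden, ← Finset.prod_mul_prod_compl (Finset.univ.filter fun i : Fin N => z i = k) (fun i => g i true + g i false)]
    have hQ : (∏ i ∈ (Finset.univ.filter fun i : Fin N => z i = k)ᶜ, (g i true + g i false)) ≠ 0 :=
      (Finset.prod_pos fun i _ => hpos i).ne'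
    rw [mul_div_mul_right _ _ hQ, ← Finset.prod_div_distrib]
    rw [hre (fun i => g i (β0 i) / (g i true + g i false))]
    refine Finset.prod_congr rfl fun j _ => ?_
    rw [hβ0e j, hfac j (β j)]
  refine ⟨h1, ?_⟩
  -- part 2
  intro t
  have hcard : ∀ b : Fin N → Bool,
      (Finset.univ.filter fun i : Fin N => z i = k ∧ b i = true).card
        = (Finset.univ.filter fun j : Fin m => b (e j : Fin N) = true).card := by
    intro b
    refine (Finset.card_bij (fun (j : Fin m) _ => ((e j : Fin N))) ?_ ?_ ?_).symm
    · intro j hj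
      simp only [Finset.mem_filter, Finset.mem_univ, true_and] at hj ⊢
      exact ⟨hzk j, hj⟩
    · intro a _ b' _ hab
      exact e.injective (Subtype.coe_injective hab)
    · intro i hi
      simp only [Finset.mem_filter, Finset.mem_univ, true_and] at hi
      have hiK : i ∈ Finset.univ.filter fun i : Fin N => z i = k := by simp [hi.1]
      refine ⟨e.symm ⟨i, hiK⟩, ?_, by simp⟩
      simp only [Finset.mem_filter, Finset.mem_univ, true_and]
      have : ((e (e.symm ⟨i, hiK⟩) : Fin N)) = i := by rw [e.apply_symm_apply]
      rw [this]
      exact hi.2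
  set sT := Finset.univ.filter
      (fun b : Fin N → Bool =>
        (Finset.univ.filter fun i : Fin N => z i = k ∧ b i = true).card = t) with hsT
  have hmaps : ∀ b ∈ sT, (Finset.univ.filter fun j : Fin m => b (e j : Fin N) = true)
      ∈ Finset.powersetCard t (Finset.univ : Finset (Fin m)) := by
    intro b hb
    rw [Finset.mem_powersetCard_univ]
    rw [hsT, Finset.mem_filter] at hb
    rw [← hcard b]
    exact hb.2
  rw [← Finset.sum_fiberwise_of_maps_to hmaps (urnJoint N α Ψ z), Finset.sum_div]
  refine Finset.sum_congr rfl fun S hS => ?_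
  have hSt : S.card = t := Finset.mem_powersetCard_univ.mp hS
  have hfib : (sT.filter fun b =>
        (Finset.univ.filter fun j : Fin m => b (e j : Fin N) = true) = S)
      = Finset.univ.filter
          (fun b : Fin N → Bool => ∀ j : Fin m, b (e j : Fin N) = decide (j ∈ S)) := by
    ext b
    simp only [Finset.mem_filter, Finset.mem_univ, true_and, hsT]
    constructor
    · rintro ⟨-, hfS⟩ j
      by_cases hjS : j ∈ S
      · have hb : b (e j : Fin N) = true := by
          have h' := hjS
          rw [← hfS, Finset.mem_filter] at h'
          exact h'.2
        simp [hb, hjS]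
      · have hb : b (e j : Fin N) = false := by
          rcases Bool.eq_false_or_eq_true (b (e j : Fin N)) with h' | h'
          · exact absurd (by rw [← hfS, Finset.mem_filter]; exact ⟨Finset.mem_univ _, h'⟩) hjS
          · exact h'
        simp [hb, hjS]
    · intro h
      have hfS : (Finset.univ.filter fun j : Fin m => b (e j : Fin N) = true) = S := by
        ext j
        simp only [Finset.mem_filter, Finset.mem_univ, true_and]
        rw [h j]
        by_cases hjS : j ∈ S <;> simp [hjS]
      exact ⟨by rw [hcard b, hfS, hSt], hfS⟩
  rw [hfib, h1 (fun j => decide (j ∈ S))]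
  have : ∀ j : Fin m,
      (if (decide (j ∈ S)) then α * Ψ k / (α * Ψ k + ((j : ℕ) : ℝ))
        else 1 - α * Ψ k / (α * Ψ k + ((j : ℕ) : ℝ)))
      = (if j ∈ S then α * Ψ k / (α * Ψ k + ((j : ℕ) : ℝ))
        else 1 - α * Ψ k / (α * Ψ k + ((j : ℕ) : ℝ))) := by
    intro j; by_cases hjS : j ∈ S <;> simp [hjS]
  rw [Finset.prod_congr rfl (fun j _ => this j), Finset.prod_ite]
  congr 1
  · apply Finset.prod_congr _ fun _ _ => rfl
    ext x; simp
  · apply Finset.prod_congr _ fun _ _ => rfl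
    ext x; simp
end
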